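/- For every real a ≥ 18, the inequality T_a(1) > log S_a(1) − log M(a) holds, where T_a(1) = 2·l(a) − l(2a), S_a(1) = (1 + 1/√(2a))/(1 − 1/√a)², M(a) = (√3/(24a−1))·(1 − 1/l(a)), and l(a) = π√(24a−1)/6. -/

import Mathlib

/-- `l(x) = π √(24x − 1)/6` -/
noncomputable def l (x : ℝ) : ℝ := Real.pi * Real.sqrt (24 * x - 1) / 6

/-- `M(x) = (√3/(24x − 1))(1 − 1/l(x))` -/
noncomputable def M (x : ℝ) : ℝ := Real.sqrt 3 / (24 * x - 1) * (1 - 1 / l x)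

/-!
With `t = √(24a − 1)` we have `24(2a) − 1 = 2t² + 1`, so `T_a(1) = 2 l(a) − l(2a)` grows like
`(π/6)(2 − √2) t ≈ 0.3067 t`, while `−log M(a) = 2 log t − log √3 − log (1 − 1/l(a))` grows
only like `2 log t`, which we bound by its tangent line at `t = 21`. For `a ≥ 18` we have
`S_a(1) ≤ 2`, and what remains is linear in `t` with positive slope and holds from `t = √431` on.
-/

open Real

noncomputable def S (a : ℝ) : ℝ := (1 + 1 / √(2 * a)) / (1 - 1 / √a) ^ 2

lemma mul_log_le_mul_log_of_pow_le {x y : ℝ} {m n : ℕ} (hx : 0 < x) (h : x ^ m ≤ y ^ n) :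
    m * log x ≤ n * log y := by
  rw [← log_pow, ← log_pow]
  exact log_le_log (by positivity) h

lemma log_le_log_add_div_sub_one {c t : ℝ} (hc : 0 < c) (ht : 0 < t) :
    log t ≤ log c + t / c - 1 := by
  have := log_le_sub_one_of_pos (div_pos ht hc)
  rw [log_div ht.ne' hc.ne'] at this
  linarith

lemma neg_inv_sub_one_le_log_one_sub_inv {x : ℝ} (hx : 1 < x) :
    -(1 / (x - 1)) ≤ log (1 - 1 / x) := by
  have hpos : 0 < 1 - 1 / x := by
    rw [sub_pos, div_lt_one (by linarith)]; exact hx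
  convert one_sub_inv_le_log_of_pos hpos using 1
  have : x - 1 ≠ 0 := by linarith
  field_simp
  ring

lemma sqrt_two_mul_sq_add_one_le {t : ℝ} (ht : 0 < t) :
    √(2 * t ^ 2 + 1) ≤ √2 * t + 1 / t := by
  have h2 : √2 ^ 2 = 2 := sq_sqrt zero_le_two
  have h1 : 1 ≤ √2 := by rw [one_le_sqrt]; norm_num
  rw [sqrt_le_left (by positivity), add_sq, mul_pow, h2, div_pow, one_pow]
  have : 2 * (√2 * t) * (1 / t) = 2 * √2 := by field_simp
  have : 0 ≤ 1 / t ^ 2 := by positivity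
  linarith

lemma two_mul_l_sub_l_two_mul_ge {a : ℝ} (ha : 1 / 24 < a) :
    π / 6 * ((2 - √2) * √(24 * a - 1) - 1 / √(24 * a - 1)) ≤ 2 * l a - l (2 * a) := by
  have ht : 0 < √(24 * a - 1) := sqrt_pos.2 (by linarith)
  have h2a : 24 * (2 * a) - 1 = 2 * √(24 * a - 1) ^ 2 + 1 := by
    rw [sq_sqrt (by linarith)]; ring
  have := sqrt_two_mul_sq_add_one_le ht
  rw [l, l, h2a]
  nlinarith [pi_pos]

lemma log_M_eq {a : ℝ} (ha : 1 < l a) :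
    log (M a) = log √3 + log (1 - 1 / l a) - 2 * log √(24 * a - 1) := by
  have ht : 0 < √(24 * a - 1) := by
    rw [l] at ha
    exact pos_of_mul_pos_right (by linarith : 0 < π * √(24 * a - 1)) pi_pos.le
  have hz : 0 < 1 - 1 / l a := by
    rw [sub_pos, div_lt_one (by linarith)]; exact ha
  have hM : M a = √3 * (1 - 1 / l a) / √(24 * a - 1) ^ 2 := by
    rw [M, sq_sqrt (sqrt_pos.1 ht).le]; ring
  rw [hM, log_div (by positivity) (by positivity), log_mul (by positivity) hz.ne', log_pow]
  push_cast
  ring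

lemma S_pos {a : ℝ} (ha : 1 < a) : 0 < S a := by
  have : 1 / √a < 1 := by
    rw [div_lt_one (by positivity), lt_sqrt zero_le_one]; linarith
  unfold S
  have : 0 < (1 - 1 / √a) ^ 2 := by nlinarith
  positivity

lemma S_le_two {a : ℝ} (ha : 18 ≤ a) : S a ≤ 2 := by
  have hu : 1 / √a ≤ 1 / 4.24 :=
    one_div_le_one_div_of_le (by norm_num) (le_sqrt_of_sq_le (by linarith))
  have hv : 1 / √(2 * a) ≤ 1 / 6 :=
    one_div_le_one_div_of_le (by norm_num) (le_sqrt_of_sq_le (by linarith))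
  have hu0 : 0 < 1 / √a := by have := sqrt_pos.2 (by linarith : 0 < a); positivity
  unfold S
  rw [div_le_iff₀ (by nlinarith)]
  nlinarith

lemma upper_bound_lt_lower_bound {t : ℝ} (ht : 20.76 ≤ t) :
    log 2 - log 3 / 2 + 1 / (π * t / 6 - 1) + 2 * (log 21 + t / 21 - 1)
      < π / 6 * ((2 - √2) * t - 1 / t) := by
  have hpi := pi_gt_d6
  have hpi' := pi_lt_d6
  have h2 : √2 ≤ 1.41422 := by rw [sqrt_le_left (by norm_num)]; norm_num
  have hlog2 := log_two_lt_d9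
  have hlog3 : 19 * log 2 ≤ 12 * log 3 := by
    exact_mod_cast mul_log_le_mul_log_of_pow_le (m := 19) (n := 12) two_pos (by norm_num)
  have hlog21 : 5 * log 21 ≤ 22 * log 2 := by
    exact_mod_cast mul_log_le_mul_log_of_pow_le (m := 5) (n := 22) (by norm_num : (0:ℝ) < 21)
      (by norm_num)
  have hl : 3.141592 * 20.76 / 6 ≤ π * t / 6 := by gcongr
  have hinvl : 1 / (π * t / 6 - 1) ≤ 1 / (3.141592 * 20.76 / 6 - 1) :=
    one_div_le_one_div_of_le (by norm_num) (by linarith)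
  have hcoef : 3.141592 * (2 - 1.41422) * t ≤ π * (2 - √2) * t := by gcongr
  have : π / 6 * (1 / t) ≤ 3.141593 / 6 * (1 / 20.76) := by gcongr
  linarith

theorem stmt18 (a : ℝ) (ha : 18 ≤ a) :
    2 * l a - l (2 * a) >
      Real.log ((1 + 1 / Real.sqrt (2 * a)) / (1 - 1 / Real.sqrt a) ^ 2)
        - Real.log (M a) := by
  set t := √(24 * a - 1)
  have ht : 20.76 ≤ t := le_sqrt_of_sq_le (by linarith)
  have hl : l a = π * t / 6 := rfl
  have hl1 : 1 < l a := by rw [hl]; nlinarith [pi_gt_three]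
  have hS : log (S a) ≤ log 2 := log_le_log (S_pos (by linarith)) (S_le_two ha)
  have hlogt := log_le_log_add_div_sub_one (c := 21) (by norm_num) (by linarith : 0 < t)
  have hz := neg_inv_sub_one_le_log_one_sub_inv hl1
  change log (S a) - log (M a) < 2 * l a - l (2 * a)
  calc log (S a) - log (M a)
      ≤ log 2 - log 3 / 2 + 1 / (π * t / 6 - 1) + 2 * (log 21 + t / 21 - 1) := by
        rw [log_M_eq hl1, log_sqrt (by norm_num), ← hl]
        linarith
    _ < π / 6 * ((2 - √2) * t - 1 / t) := upper_bound_lt_lower_bound ht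
    _ ≤ 2 * l a - l (2 * a) := two_mul_l_sub_l_two_mul_ge (by linarith)
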